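/- arXiv:1803.09056 — 2 statements merged into one kernel-verified Lean document; each statement's English description precedes it below -/
import Mathlib

section
/- Let G be a (possibly infinite, locally finite) graph and k a positive integer. Define the k-bootstrap closure of a set I of vertices as the smallest set S containing I such that every vertex with at least k neighbors in S belongs to S. If G contains a nonempty finite set C of vertices, disjoint from I, such that every vertex of C has at most k-1 neighbors outside C, then the k-bootstrap closure of I does not contain any vertex of C. -/
/-- The `k`-bootstrap closure of `I`: the smallest set containing `I` that is closed
under the rule that any vertex with at least `k` neighbors in the set belongs to it. -/
def bootstrapClosure {V : Type*} (G : SimpleGraph V) (k : ℕ) (I : Set V) : Set V :=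
  ⋂₀ {S : Set V | I ⊆ S ∧ ∀ v : V, k ≤ (G.neighborSet v ∩ S).ncard → v ∈ S}

theorem bootstrap_closure_avoids_protected_set {V : Type*} (G : SimpleGraph V)
    [G.LocallyFinite] (k : ℕ) (hk : 0 < k) (I : Set V) (C : Set V)
    (hCfin : C.Finite) (hCne : C.Nonempty) (hdisj : Disjoint C I)
    (hC : ∀ v ∈ C, (G.neighborSet v \ C).ncard ≤ k - 1) :
    ∀ v ∈ C, v ∉ bootstrapClosure G k I := by
  intro v hv hvcl
  have hmem : Cᶜ ∈ {S : Set V | I ⊆ S ∧ ∀ w : V, k ≤ (G.neighborSet w ∩ S).ncard → w ∈ S} := by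
    constructor
    · exact (Set.disjoint_right.mp hdisj)
    · intro w hw
      by_contra hwC
      rw [Set.notMem_compl_iff] at hwC
      have := hC w hwC
      rw [Set.diff_eq] at this
      have : k ≤ k - 1 := hw.trans this
      omega
  exact (hvcl Cᶜ hmem) hv
end

section
/- In the square lattice graph Z² (vertices are unit squares, two squares adjacent if they share an edge), for the 2-bootstrap process: if the initially infected set contains all squares in the box [-t, t]² and, for every s ≥ t, each of the four sides of the ring [-(s+1), s+1]² \ [-s, s]² contains at least one initially infected square, then every square in the plane eventually becomes infected. -/
/-- Two cells of `ℤ²` are adjacent if they differ by 1 in exactly one coordinate. -/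
def gridAdj (a b : ℤ × ℤ) : Prop := (a.1 - b.1).natAbs + (a.2 - b.2).natAbs = 1

/-- `Infected I k v` : cell `v` eventually becomes infected in the `k`-bootstrap
process on `ℤ²` started from the initially infected set `I`. -/
inductive Infected (I : Set (ℤ × ℤ)) (k : ℕ) : ℤ × ℤ → Prop
  | init {v : ℤ × ℤ} : v ∈ I → Infected I k v
  | spread {v : ℤ × ℤ} (N : Finset (ℤ × ℤ)) (hcard : k ≤ N.card)
      (hadj : ∀ w ∈ N, gridAdj v w) (hinf : ∀ w ∈ N, Infected I k w) : Infected I k v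

lemma spread2 {I : Set (ℤ × ℤ)} {v a b : ℤ × ℤ} (hab : a ≠ b)
    (ha : gridAdj v a) (hb : gridAdj v b)
    (hia : Infected I 2 a) (hib : Infected I 2 b) : Infected I 2 v := by
  refine Infected.spread {a, b} ?_ ?_ ?_
  · rw [Finset.card_pair hab]
  · intro w hw
    rcases Finset.mem_insert.mp hw with rfl | hw
    · exact ha
    · rw [Finset.mem_singleton.mp hw]; exact hb
  · intro w hw
    rcases Finset.mem_insert.mp hw with rfl | hw
    · exact hia
    · rw [Finset.mem_singleton.mp hw]; exact hib

lemma gridAdj_of (a b : ℤ × ℤ) (h : (a.1 - b.1).natAbs + (a.2 - b.2).natAbs = 1) :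
    gridAdj a b := h

/-- 1D propagation: if `P` holds at a point `x0` of `[-(s+1), s+1]` and spreads to
adjacent points of `[-s, s]`, then it holds on all of `[-s, s]`. -/
lemma propagate (s : ℤ) (P : ℤ → Prop) (x0 : ℤ)
    (hx0l : -(s+1) ≤ x0) (hx0r : x0 ≤ s+1) (hP0 : P x0)
    (hstep : ∀ a b : ℤ, -s ≤ b → b ≤ s → (b = a + 1 ∨ b = a - 1) → P a → P b) :
    ∀ a : ℤ, -s ≤ a → a ≤ s → P a := by
  have key : ∀ n : ℕ, ∀ a : ℤ, -s ≤ a → a ≤ s → (a - x0).natAbs = n → P a := by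
    intro n
    induction n with
    | zero =>
      intro a ha1 ha2 h
      have : a = x0 := by omega
      subst this; exact hP0
    | succ n ih =>
      intro a ha1 ha2 h
      by_cases hlt : x0 < a
      · by_cases hb : a - 1 = x0
        · exact hstep x0 a ha1 ha2 (Or.inl (by omega)) hP0
        · have := ih (a - 1) (by omega) (by omega) (by omega)
          exact hstep (a - 1) a ha1 ha2 (Or.inl (by omega)) this
      · by_cases hb : a + 1 = x0
        · exact hstep x0 a ha1 ha2 (Or.inr (by omega)) hP0
        · have := ih (a + 1) (by omega) (by omega) (by omega)
          exact hstep (a + 1) a ha1 ha2 (Or.inr (by omega)) this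
  intro a ha1 ha2
  exact key _ a ha1 ha2 rfl

/-- Growing the infected box by one ring. -/
lemma ring_step (I : Set (ℤ × ℤ)) (s : ℤ) (hs : 0 ≤ s)
    (hbox : ∀ x y : ℤ, -s ≤ x → x ≤ s → -s ≤ y → y ≤ s → Infected I 2 (x, y))
    (htop : ∃ x : ℤ, |x| ≤ s + 1 ∧ (x, s + 1) ∈ I)
    (hbot : ∃ x : ℤ, |x| ≤ s + 1 ∧ (x, -(s + 1)) ∈ I)
    (hleft : ∃ y : ℤ, |y| ≤ s + 1 ∧ (-(s + 1), y) ∈ I)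
    (hright : ∃ y : ℤ, |y| ≤ s + 1 ∧ (s + 1, y) ∈ I) :
    ∀ x y : ℤ, -(s+1) ≤ x → x ≤ s+1 → -(s+1) ≤ y → y ≤ s+1 → Infected I 2 (x, y) := by
  obtain ⟨xt, hxt, hIt⟩ := htop
  obtain ⟨xb, hxb, hIb⟩ := hbot
  obtain ⟨yl, hyl, hIl⟩ := hleft
  obtain ⟨yr, hyr, hIr⟩ := hright
  rw [abs_le] at hxt hxb hyl hyr
  have htopfill : ∀ a : ℤ, -s ≤ a → a ≤ s → Infected I 2 (a, s + 1) := by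
    refine propagate s (fun a => Infected I 2 (a, s + 1)) xt hxt.1 hxt.2
      (Infected.init hIt) ?_
    intro a b hb1 hb2 hab hPa
    refine spread2 (a := (a, s+1)) (b := (b, s)) (by simp <;> omega)
      (gridAdj_of _ _ (by simp <;> omega)) (gridAdj_of _ _ (by simp <;> omega)) hPa
      (hbox b s hb1 hb2 (by omega) le_rfl)
  have hbotfill : ∀ a : ℤ, -s ≤ a → a ≤ s → Infected I 2 (a, -(s + 1)) := by
    refine propagate s (fun a => Infected I 2 (a, -(s + 1))) xb hxb.1 hxb.2
      (Infected.init hIb) ?_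
    intro a b hb1 hb2 hab hPa
    refine spread2 (a := (a, -(s+1))) (b := (b, -s)) (by simp <;> omega)
      (gridAdj_of _ _ (by simp <;> omega)) (gridAdj_of _ _ (by simp <;> omega)) hPa
      (hbox b (-s) hb1 hb2 le_rfl (by omega))
  have hleftfill : ∀ a : ℤ, -s ≤ a → a ≤ s → Infected I 2 (-(s + 1), a) := by
    refine propagate s (fun a => Infected I 2 (-(s + 1), a)) yl hyl.1 hyl.2
      (Infected.init hIl) ?_
    intro a b hb1 hb2 hab hPa
    refine spread2 (a := (-(s+1), a)) (b := (-s, b)) (by simp <;> omega)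
      (gridAdj_of _ _ (by simp <;> omega)) (gridAdj_of _ _ (by simp <;> omega)) hPa
      (hbox (-s) b le_rfl (by omega) hb1 hb2)
  have hrightfill : ∀ a : ℤ, -s ≤ a → a ≤ s → Infected I 2 (s + 1, a) := by
    refine propagate s (fun a => Infected I 2 (s + 1, a)) yr hyr.1 hyr.2
      (Infected.init hIr) ?_
    intro a b hb1 hb2 hab hPa
    refine spread2 (a := (s+1, a)) (b := (s, b)) (by simp <;> omega)
      (gridAdj_of _ _ (by simp <;> omega)) (gridAdj_of _ _ (by simp <;> omega)) hPa
      (hbox s b (by omega) le_rfl hb1 hb2)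
  have hTR : Infected I 2 (s + 1, s + 1) :=
    spread2 (a := (s, s+1)) (b := (s+1, s)) (by simp <;> omega)
      (gridAdj_of _ _ (by simp <;> omega)) (gridAdj_of _ _ (by simp <;> omega))
      (htopfill s (by omega) le_rfl) (hrightfill s (by omega) le_rfl)
  have hTL : Infected I 2 (-(s + 1), s + 1) :=
    spread2 (a := (-s, s+1)) (b := (-(s+1), s)) (by simp <;> omega)
      (gridAdj_of _ _ (by simp <;> omega)) (gridAdj_of _ _ (by simp <;> omega))
      (htopfill (-s) le_rfl (by omega)) (hleftfill s (by omega) le_rfl)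
  have hBR : Infected I 2 (s + 1, -(s + 1)) :=
    spread2 (a := (s, -(s+1))) (b := (s+1, -s)) (by simp <;> omega)
      (gridAdj_of _ _ (by simp <;> omega)) (gridAdj_of _ _ (by simp <;> omega))
      (hbotfill s (by omega) le_rfl) (hrightfill (-s) le_rfl (by omega))
  have hBL : Infected I 2 (-(s + 1), -(s + 1)) :=
    spread2 (a := (-s, -(s+1))) (b := (-(s+1), -s)) (by simp <;> omega)
      (gridAdj_of _ _ (by simp <;> omega)) (gridAdj_of _ _ (by simp <;> omega))
      (hbotfill (-s) le_rfl (by omega)) (hleftfill (-s) le_rfl (by omega))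
  intro x y hx1 hx2 hy1 hy2
  by_cases hy : y = s + 1
  · subst hy
    by_cases hx : x = s + 1
    · subst hx; exact hTR
    · by_cases hx' : x = -(s + 1)
      · subst hx'; exact hTL
      · exact htopfill x (by omega) (by omega)
  · by_cases hy' : y = -(s + 1)
    · subst hy'
      by_cases hx : x = s + 1
      · subst hx; exact hBR
      · by_cases hx' : x = -(s + 1)
        · subst hx'; exact hBL
        · exact hbotfill x (by omega) (by omega)
    · by_cases hx : x = s + 1
      · subst hx; exact hrightfill y (by omega) (by omega)
      · by_cases hx' : x = -(s + 1)
        · subst hx'; exact hleftfill y (by omega) (by omega)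
        · exact hbox x y (by omega) (by omega) (by omega) (by omega)

theorem square_lattice_box_and_rings_percolate (I : Set (ℤ × ℤ)) (t : ℤ)
    (hbox : ∀ x y : ℤ, |x| ≤ t → |y| ≤ t → (x, y) ∈ I)
    (hrings : ∀ s : ℤ, t ≤ s →
      (∃ x : ℤ, |x| ≤ s + 1 ∧ (x, s + 1) ∈ I) ∧
      (∃ x : ℤ, |x| ≤ s + 1 ∧ (x, -(s + 1)) ∈ I) ∧
      (∃ y : ℤ, |y| ≤ s + 1 ∧ (-(s + 1), y) ∈ I) ∧
      (∃ y : ℤ, |y| ≤ s + 1 ∧ (s + 1, y) ∈ I)) :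
    ∀ v : ℤ × ℤ, Infected I 2 v := by
  set s0 : ℤ := max t 0 with hs0
  have hs0nn : 0 ≤ s0 := le_max_right _ _
  have hts0 : t ≤ s0 := le_max_left _ _
  -- base box
  have hbase : ∀ x y : ℤ, -s0 ≤ x → x ≤ s0 → -s0 ≤ y → y ≤ s0 → Infected I 2 (x, y) := by
    rcases le_or_gt 0 t with ht | ht
    · have : s0 = t := by simp [hs0, ht]
      intro x y hx1 hx2 hy1 hy2
      exact Infected.init (hbox x y (abs_le.mpr ⟨by omega, by omega⟩)
        (abs_le.mpr ⟨by omega, by omega⟩))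
    · have hs0z : s0 = 0 := by simp [hs0]; omega
      intro x y hx1 hx2 hy1 hy2
      have hx : x = 0 := by omega
      have hy : y = 0 := by omega
      subst hx; subst hy
      obtain ⟨⟨x0, hx0, hI0⟩, -, -, -⟩ := hrings (-1) (by omega)
      have : x0 = 0 := by
        rw [abs_le] at hx0; omega
      subst this
      have h0 : (-1 : ℤ) + 1 = 0 := by norm_num
      rw [h0] at hI0
      exact Infected.init hI0
  have key : ∀ n : ℕ, ∀ x y : ℤ, -(s0 + n) ≤ x → x ≤ s0 + n → -(s0 + n) ≤ y → y ≤ s0 + n →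
      Infected I 2 (x, y) := by
    intro n
    induction n with
    | zero => simpa using hbase
    | succ n ih =>
      obtain ⟨h1, h2, h3, h4⟩ := hrings (s0 + n) (by omega)
      have := ring_step I (s0 + n) (by omega) (fun x y => ih x y) h1 h2 h3 h4
      intro x y hx1 hx2 hy1 hy2
      exact this x y (by omega) (by omega)
        (by omega) (by omega)
  rintro ⟨x, y⟩
  refine key (x.natAbs + y.natAbs) x y ?_ ?_ ?_ ?_ <;> omega
end
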